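/- arXiv:2602.18816 — 3 statements merged into one kernel-verified Lean document; each statement's English description precedes it below -/
import Mathlib

section
/- For every natural number m ≥ 2, there is no function F : ℝ → ℝ such that ∑_j (ν j − 1) = F(∑_j log(ν j)) holds for all ν : Fin m → ℝ with ν j ≥ 1 for every j. In particular, for any real C > 1, the choices (√C, √C) and (C, 1) (padded with 1's) have equal values of ∑_j log(ν j) (namely log C) but different values of ∑_j (ν j − 1), since 2(√C − 1) < C − 1. -/
/-!
The Rényi-2 entropy `∑ log νⱼ` only sees the product `∏ νⱼ`, while the gap `∑ (νⱼ - 1)` sees the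
sum. Splitting an eigenvalue `C > 1` into `√C, √C` keeps the product but lowers the sum by
`(√C - 1)² > 0`, so two spectra with the same entropy have different gaps.
-/

open Finset

lemma Fin.sum_apply_ite_val_lt {α M : Type*} [AddCommMonoid M] {m k : ℕ} (hk : k ≤ m)
    (g : α → M) (a b : α) (hb : g b = 0) :
    ∑ j : Fin m, g (if (j : ℕ) < k then a else b) = k • g a := by
  simp only [apply_ite g, hb]
  rw [Fin.sum_univ_eq_sum_range (fun i => if i < k then g a else 0), sum_ite, sum_const_zero,
    add_zero, Finset.sum_const, show {i ∈ range m | i < k} = range k by ext; simp; omega,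
    card_range]

lemma Fin.sum_apply_ite_val_eq_zero {α M : Type*} [AddCommMonoid M] {m : ℕ} (hm : 0 < m)
    (g : α → M) (a b : α) (hb : g b = 0) :
    ∑ j : Fin m, g (if (j : ℕ) = 0 then a else b) = g a := by
  rw [Fintype.sum_eq_single ⟨0, hm⟩ fun j hj => by rw [if_neg (Fin.val_ne_iff.mpr hj), hb]]
  rfl

lemma not_exists_factorization {α β γ : Type*} {p : α → Prop} {f : α → γ} {g : α → β}
    {x y : α} (hx : p x) (hy : p y) (hg : g x = g y) (hf : f x ≠ f y) :
    ¬ ∃ F : β → γ, ∀ z, p z → f z = F (g z) := by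
  rintro ⟨F, hF⟩
  exact hf (by rw [hF x hx, hF y hy, hg])

lemma Real.two_mul_sqrt_sub_one_lt {x : ℝ} (hx : 1 < x) : 2 * (√x - 1) < x - 1 := by
  have hsqrt : 1 < √x := (Real.lt_sqrt zero_le_one).mpr (by simpa using hx)
  nlinarith [Real.mul_self_sqrt (by linarith : (0 : ℝ) ≤ x)]

/-- For m ≥ 2 there is no function F with ∑ (ν j − 1) = F (∑ log (ν j)) for all
ν ≥ 1; in particular, for any C > 1 the padded spectra (√C, √C, 1, …) and
(C, 1, 1, …) have equal log-sums (= log C) but different gap-sums, since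
2(√C − 1) < C − 1. -/
theorem no_functional_dependence (m : ℕ) (hm : 2 ≤ m) :
    (¬ ∃ F : ℝ → ℝ, ∀ ν : Fin m → ℝ, (∀ j, 1 ≤ ν j) →
        ∑ j, (ν j - 1) = F (∑ j, Real.log (ν j))) ∧
    ∀ C : ℝ, 1 < C →
      (∑ j : Fin m, Real.log (if (j : ℕ) < 2 then Real.sqrt C else 1) = Real.log C) ∧
      (∑ j : Fin m, Real.log (if (j : ℕ) = 0 then C else 1) = Real.log C) ∧
      (∑ j : Fin m, ((if (j : ℕ) < 2 then Real.sqrt C else 1) - 1)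
        = 2 * (Real.sqrt C - 1)) ∧
      (∑ j : Fin m, ((if (j : ℕ) = 0 then C else 1) - 1) = C - 1) ∧
      2 * (Real.sqrt C - 1) < C - 1 := by
  have hm0 : 0 < m := by omega
  -- the second conjunct is proved first; the first one is read off from it at `C = 2`
  refine (and_iff_right_of_imp fun facts => ?_).mpr fun C hC =>
    ⟨by rw [Fin.sum_apply_ite_val_lt hm _ _ _ Real.log_one, nsmul_eq_mul,
          Real.log_sqrt (by linarith)]; ring,
      Fin.sum_apply_ite_val_eq_zero hm0 Real.log _ _ Real.log_one,
      by rw [Fin.sum_apply_ite_val_lt hm (· - 1) _ _ (sub_self 1), nsmul_eq_mul]; norm_num,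
      Fin.sum_apply_ite_val_eq_zero hm0 (· - 1) _ _ (sub_self 1),
      Real.two_mul_sqrt_sub_one_lt hC⟩
  obtain ⟨hlog_sqrt, hlog, hgap_sqrt, hgap, hlt⟩ := facts 2 one_lt_two
  refine not_exists_factorization (p := fun ν : Fin m → ℝ => ∀ j, 1 ≤ ν j)
    (fun _ => ?_) (fun _ => ?_) (hlog_sqrt.trans hlog.symm) ?_
  · split_ifs <;> simp
  · split_ifs <;> norm_num
  · rw [hgap_sqrt, hgap]
    exact hlt.ne
end

section
/- Let ν : Fin 3 → ℝ satisfy ν i ≥ 1 for all i. Define Δ = min_{i} (ν i − 1) and G = 1 − max_{i} (2 / (1 + ν i)). Then Δ = 2·G / (1 − G). -/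
lemma inf'_fin3 (f : Fin 3 → ℝ) :
    Finset.univ.inf' Finset.univ_nonempty f = min (f 0) (min (f 1) (f 2)) := by
  apply le_antisymm
  · exact le_min (Finset.inf'_le _ (Finset.mem_univ _))
      (le_min (Finset.inf'_le _ (Finset.mem_univ _)) (Finset.inf'_le _ (Finset.mem_univ _)))
  · apply Finset.le_inf'
    intro i _
    fin_cases i
    · exact min_le_left _ _
    · exact le_trans (min_le_right _ _) (min_le_left _ _)
    · exact le_trans (min_le_right _ _) (min_le_right _ _)

lemma sup'_fin3 (f : Fin 3 → ℝ) :
    Finset.univ.sup' Finset.univ_nonempty f = max (f 0) (max (f 1) (f 2)) := by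
  apply le_antisymm
  · apply Finset.sup'_le
    intro i _
    fin_cases i
    · exact le_max_left _ _
    · exact le_trans (le_max_left _ _) (le_max_right _ _)
    · exact le_trans (le_max_right _ _) (le_max_right _ _)
  · exact max_le (Finset.le_sup' _ (Finset.mem_univ _))
      (max_le (Finset.le_sup' _ (Finset.mem_univ _)) (Finset.le_sup' _ (Finset.mem_univ _)))

lemma max_div_pair (x y : ℝ) (hx : 1 ≤ x) (hy : 1 ≤ y) :
    max (2 / (1 + x)) (2 / (1 + y)) = 2 / (1 + min x y) := by
  rcases le_total x y with h | h
  · rw [min_eq_left h, max_eq_left]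
    apply div_le_div_of_nonneg_left (by norm_num) (by linarith) (by linarith)
  · rw [min_eq_right h, max_eq_right]
    apply div_le_div_of_nonneg_left (by norm_num) (by linarith) (by linarith)

/-- For ν : Fin 3 → ℝ with ν i ≥ 1, setting Δ = min_i (ν i − 1) and
G = 1 − max_i 2/(1 + ν i), we have Δ = 2 G / (1 − G). -/
theorem ergotropic_score_eq_ggm (ν : Fin 3 → ℝ) (hν : ∀ i, 1 ≤ ν i) :
    Finset.univ.inf' Finset.univ_nonempty (fun i => ν i - 1) =
      2 * (1 - Finset.univ.sup' Finset.univ_nonempty (fun i => 2 / (1 + ν i))) /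
        (1 - (1 - Finset.univ.sup' Finset.univ_nonempty (fun i => 2 / (1 + ν i)))) := by
  rw [inf'_fin3, sup'_fin3]
  have h0 := hν 0; have h1 := hν 1; have h2 := hν 2
  rw [max_div_pair (ν 1) (ν 2) h1 h2,
      max_div_pair (ν 0) (min (ν 1) (ν 2)) h0 (le_min h1 h2)]
  set m := min (ν 0) (min (ν 1) (ν 2)) with hm
  have hm1 : 1 ≤ m := le_min h0 (le_min h1 h2)
  have hmne : (1 : ℝ) + m ≠ 0 := by linarith
  have : min (ν 0 - 1) (min (ν 1 - 1) (ν 2 - 1)) = m - 1 := by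
    rw [hm]
    rcases le_total (ν 0) (min (ν 1) (ν 2)) with h | h <;>
      rcases le_total (ν 1) (ν 2) with h' | h' <;>
      simp_all [min_def]
  rw [this]
  field_simp
  ring
end

section
/- For every real ν ≥ 1, one has ((ν+1)/2)·log((ν+1)/2) − ((ν−1)/2)·log((ν−1)/2) < log ν + 1, where log is the natural logarithm (with the convention that the term ((ν−1)/2)·log((ν−1)/2) vanishes at ν = 1, which is automatic in Lean since Real.log 0 = 0). -/
open Real

/-- At `b = 0` both sides read `0 < 1`, thanks to `log 0 = 0`; for `b > 0` this is
`log (1 + 1/b) < 1/b`. -/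
theorem mul_log_add_one_sub_log_lt_one {b : ℝ} (hb : 0 ≤ b) :
    b * (log (b + 1) - log b) < 1 := by
  rcases hb.eq_or_lt with rfl | hb
  · norm_num
  have hratio : 1 < (b + 1) / b := by rw [lt_div_iff₀ hb]; linarith
  calc b * (log (b + 1) - log b) = b * log ((b + 1) / b) := by
        rw [log_div (by linarith) hb.ne']
    _ < b * ((b + 1) / b - 1) :=
        mul_lt_mul_of_pos_left (log_lt_sub_one_of_pos (by linarith) hratio.ne') hb
    _ = 1 := by field_simp; ring

/-- With `b = (ν - 1)/2`, `f(ν) = log (b + 1) + b (log (b + 1) - log b)`: the first term is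
at most `log ν` because `b + 1 ≤ ν`, the second is below `1`. -/
theorem entropy_lt_log_add_one (ν : ℝ) (hν : 1 ≤ ν) :
    ((ν + 1) / 2) * Real.log ((ν + 1) / 2) -
      ((ν - 1) / 2) * Real.log ((ν - 1) / 2) < Real.log ν + 1 := by
  have hgap := mul_log_add_one_sub_log_lt_one (b := (ν - 1) / 2) (by linarith)
  have hmono : log ((ν + 1) / 2) ≤ log ν := log_le_log (by linarith) (by linarith)
  rw [show (ν + 1) / 2 = (ν - 1) / 2 + 1 by ring] at hmono ⊢
  linear_combination hgap + hmono
end
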